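/- Let e be a twist on the finite G-set X. Then the 𝕜-module R_G(X×X), equipped with the twisted convolution product (f*g)(x,y) := Σ_{z∈X} f(x,z)·e(z)^{-1}·g(z,y), is a unital associative 𝕜-algebra: the convolution of two G-equivariant functions is again G-equivariant, the product is 𝕜-bilinear and associative, and the element 1_X defined by 1_X(x,y) = δ_{x,y}·e(x) is a two-sided unit. -/

import Mathlib

/-!
Twisted convolution algebras: `R_G(X×X)` with the twisted convolution product
`(f*g)(x,y) = ∑_z f(x,z)·e(z)⁻¹·g(z,y)` is a unital associative 𝕜-algebra.
-/

open Finset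

/-- A `G`-equivariant function on a `G`-set. -/
def Equivariant1 (G : Type*) {X R : Type*} [SMul G X] [SMul G R] (e : X → R) : Prop :=
  ∀ (g : G) (x : X), e (g • x) = g • e x

/-- A `G`-equivariant function on `X × X` (diagonal action), written with two arguments. -/
def Equivariant2 (G : Type*) {X R : Type*} [SMul G X] [SMul G R] (f : X → X → R) : Prop :=
  ∀ (g : G) (x y : X), f (g • x) (g • y) = g • f x y

/-- The twisted convolution product with twist `e`. -/
noncomputable def tconv {X R : Type*} [Ring R] [Fintype X] (e : X → R)
    (f g : X → X → R) : X → X → R :=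
  fun x y => ∑ z, f x z * Ring.inverse (e z) * g z y

/-- The proposed unit `1_X (x,y) = δ_{x,y} e(x)`. -/
noncomputable def oneX {X R : Type*} [Ring R] [DecidableEq X] (e : X → R) : X → X → R :=
  fun x y => if x = y then e x else 0

/-! Convolution of equivariant kernels is equivariant because `G` acts on `R` by ring
automorphisms, which commute with `Ring.inverse`, and because `z ↦ g • z` permutes the summation
index. Associativity is the exchange of two finite sums, and `1_X` is a unit since
`e x * (e x)⁻¹ = 1`. -/

theorem map_ringInverse {M₀ N₀ F : Type*} [MonoidWithZero M₀] [MonoidWithZero N₀]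
    [EquivLike F M₀ N₀] [MulEquivClass F M₀ N₀] (f : F) (a : M₀) :
    f (Ring.inverse a) = Ring.inverse (f a) := by
  by_cases ha : IsUnit a
  · obtain ⟨u, rfl⟩ := ha
    rw [Ring.inverse_unit]
    exact (Ring.inverse_unit (Units.map (f : M₀ →* N₀) u)).symm
  · rw [Ring.inverse_non_unit a ha, Ring.inverse_non_unit _ (by rwa [isUnit_map_iff]), map_zero]

theorem smul_ringInverse {G R : Type*} [Group G] [Semiring R] [MulSemiringAction G R]
    (g : G) (a : R) : g • Ring.inverse a = Ring.inverse (g • a) :=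
  map_ringInverse (MulSemiringAction.toRingEquiv G R g) a

theorem equivariant2_oneX {G X R : Type*} [Ring R] [DecidableEq X] [Group G]
    [DistribMulAction G R] [MulAction G X] {e : X → R} (he : Equivariant1 G e) :
    Equivariant2 G (oneX e) := by
  intro γ x y
  by_cases hxy : x = y
  · simp only [oneX, hxy, if_true, he γ y]
  · simp only [oneX, smul_left_cancel_iff, hxy, if_false, smul_zero]

section TwistedConvolution

variable {X R : Type*} [Ring R] [Fintype X] {e : X → R}

theorem Equivariant2.tconv {G : Type*} [Group G] [MulSemiringAction G R] [MulAction G X]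
    (he : Equivariant1 G e) {f g : X → X → R}
    (hf : Equivariant2 G f) (hg : Equivariant2 G g) : Equivariant2 G (tconv e f g) := by
  intro γ x y
  simp only [_root_.tconv, smul_sum]
  refine (Fintype.sum_equiv (MulAction.toPerm γ) _ _ fun z => ?_).symm
  rw [MulAction.toPerm_apply, hf, hg, he, ← smul_ringInverse, smul_mul', smul_mul']

theorem tconv_add_left (f f' g : X → X → R) :
    tconv e (f + f') g = tconv e f g + tconv e f' g := by
  funext x y
  simp only [tconv, Pi.add_apply, add_mul, sum_add_distrib]

theorem tconv_add_right (f g g' : X → X → R) :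
    tconv e f (g + g') = tconv e f g + tconv e f g' := by
  funext x y
  simp only [tconv, Pi.add_apply, mul_add, sum_add_distrib]

theorem tconv_smul_left {k : Type*} [DistribSMul k R] [IsScalarTower k R R]
    (c : k) (f g : X → X → R) : tconv e (c • f) g = c • tconv e f g := by
  funext x y
  simp only [tconv, Pi.smul_apply, smul_mul_assoc, smul_sum]

theorem tconv_smul_right {k : Type*} [DistribSMul k R] [SMulCommClass k R R]
    (c : k) (f g : X → X → R) : tconv e f (c • g) = c • tconv e f g := by
  funext x y
  simp only [tconv, Pi.smul_apply, mul_smul_comm, smul_sum]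

theorem tconv_assoc (f g h : X → X → R) :
    tconv e (tconv e f g) h = tconv e f (tconv e g h) := by
  funext x y
  simp only [tconv, sum_mul, mul_sum]
  rw [sum_comm]
  simp only [mul_assoc]

variable [DecidableEq X]

theorem tconv_oneX_left (hu : ∀ x, IsUnit (e x)) (f : X → X → R) :
    tconv e (oneX e) f = f := by
  funext x y
  rw [tconv, sum_eq_single_of_mem x (mem_univ x) fun z _ hz => by simp [oneX, Ne.symm hz]]
  simp only [oneX, if_true, Ring.mul_inverse_cancel _ (hu x), one_mul]

theorem tconv_oneX_right (hu : ∀ x, IsUnit (e x)) (f : X → X → R) :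
    tconv e f (oneX e) = f := by
  funext x y
  rw [tconv, sum_eq_single_of_mem y (mem_univ y) fun z _ hz => by simp [oneX, hz]]
  simp only [oneX, if_true, mul_assoc, Ring.inverse_mul_cancel _ (hu y), mul_one]

end TwistedConvolution

theorem stmt0 {k G R X : Type*} [Field k] [Group G] [Ring R] [Algebra k R]
    [MulSemiringAction G R]
    [Fintype X] [DecidableEq X] [MulAction G X]
    (e : X → R) (heq : Equivariant1 G e) (hu : ∀ x, IsUnit (e x)) :
    -- the convolution of two equivariant functions is equivariant
    (∀ f g : X → X → R, Equivariant2 G f → Equivariant2 G g →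
        Equivariant2 G (tconv e f g)) ∧
    -- the product is 𝕜-bilinear
    (∀ (c : k) (f f' g : X → X → R),
        tconv e (c • f + f') g = c • tconv e f g + tconv e f' g) ∧
    (∀ (c : k) (f g g' : X → X → R),
        tconv e f (c • g + g') = c • tconv e f g + tconv e f g') ∧
    -- the product is associative
    (∀ f g h : X → X → R, tconv e (tconv e f g) h = tconv e f (tconv e g h)) ∧
    -- `1_X` is equivariant and is a two-sided unit
    Equivariant2 G (oneX e) ∧
    (∀ f : X → X → R, tconv e (oneX e) f = f ∧ tconv e f (oneX e) = f) :=
  ⟨fun _ _ hf hg => hf.tconv heq hg,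
    fun c f f' g => by rw [tconv_add_left, tconv_smul_left],
    fun c f g g' => by rw [tconv_add_right, tconv_smul_right],
    tconv_assoc,
    equivariant2_oneX heq,
    fun f => ⟨tconv_oneX_left hu f, tconv_oneX_right hu f⟩⟩
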